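/- Suppose |S| ≥ 2, |B| ≥ |S|, and v_b(G) ≥ 1 for every b ∈ B. Then for every single-seller partition π̂ of G, every seller profile τ, and every buyer assignment σ that is a Nash equilibrium for τ, |G|·SW(τ,σ) ≥ SW(π̂); that is, the welfare at any equilibrium of the competitive game is at least a 1/|G| fraction of the welfare achieved by any monopolist. -/

import Mathlib

open Finset

variable {B G S : Type*} [Fintype B] [Fintype G] [Fintype S]
variable [DecidableEq B] [DecidableEq G] [DecidableEq S]

/-- `v_b(Ḡ)`: buyer `b`'s total valuation of the variants in `Ḡ`. -/
def vsum (v : B → G → ℕ) (b : B) (Gb : Finset G) : ℕ := ∑ g ∈ Gb, v b g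

/-- `V̄1(B̄,Ḡ)`: the largest value among `(v_b(Ḡ))_{b∈B̄}` (`0` if `B̄ = ∅`). -/
def V1 (v : B → G → ℕ) (Bb : Finset B) (Gb : Finset G) : ℕ :=
  Bb.sup (fun b => vsum v b Gb)

/-- `V̄2(B̄,Ḡ)`: the second-largest value, counted with multiplicity
(`0` if `|B̄| ≤ 1`).  It equals the minimum, over removal of one buyer,
of the maximum over the remaining buyers. -/
def V2 (v : B → G → ℕ) (Bb : Finset B) (Gb : Finset G) : ℕ :=
  if h : Bb.Nonempty then Bb.inf' h (fun b => V1 v (Bb.erase b) Gb) else 0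

/-- The set of buyers choosing seller `s` under the assignment `σ`. -/
def buyersOf (σ : B → S) (s : S) : Finset B := univ.filter (fun b => σ b = s)

/-- Buyer `b`'s utility in the multi-seller game. -/
def ubuyer (v : B → G → ℕ) (τ : S → Finpartition (univ : Finset G)) (σ : B → S) (b : B) : ℚ :=
  (Fintype.card G : ℚ)⁻¹ *
    ∑ Gb ∈ (τ (σ b)).parts, max ((vsum v b Gb : ℚ) - (V2 v (buyersOf σ (σ b)) Gb : ℚ)) 0

/-- Seller `s`'s utility in the multi-seller game. -/
def useller (v : B → G → ℕ) (τ : S → Finpartition (univ : Finset G)) (σ : B → S) (s : S) : ℚ :=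
  (Fintype.card G : ℚ)⁻¹ * ∑ Gb ∈ (τ s).parts, (V2 v (buyersOf σ s) Gb : ℚ)

/-- Social welfare in the multi-seller game. -/
def SWm (v : B → G → ℕ) (τ : S → Finpartition (univ : Finset G)) (σ : B → S) : ℚ :=
  ((Fintype.card S : ℚ) * (Fintype.card G : ℚ))⁻¹ *
    ∑ s : S, ∑ Gb ∈ (τ s).parts, (V1 v (buyersOf σ s) Gb : ℚ)

/-- Social welfare in the single-seller (monopoly) game. -/
def SW1 (v : B → G → ℕ) (π : Finpartition (univ : Finset G)) : ℚ :=
  (Fintype.card G : ℚ)⁻¹ * ∑ Gb ∈ π.parts, (V1 v (univ : Finset B) Gb : ℚ)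

/-- The monopolist's revenue. -/
def rev1 (v : B → G → ℕ) (π : Finpartition (univ : Finset G)) : ℚ :=
  (Fintype.card G : ℚ)⁻¹ * ∑ Gb ∈ π.parts, (V2 v (univ : Finset B) Gb : ℚ)

/-- Buyer `b`'s utility in the monopoly game. -/
def ub1 (v : B → G → ℕ) (π : Finpartition (univ : Finset G)) (b : B) : ℚ :=
  (Fintype.card G : ℚ)⁻¹ *
    ∑ Gb ∈ π.parts, max ((vsum v b Gb : ℚ) - (V2 v (univ : Finset B) Gb : ℚ)) 0

/-- `π` refines `π̂`: every block of `π̂` is a union of blocks of `π`. -/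
def IsRefinement (π πhat : Finpartition (univ : Finset G)) : Prop :=
  ∀ t ∈ πhat.parts, ∃ P ⊆ π.parts, t = P.sup id

/-- `σ` is a (pure) Nash equilibrium of the buyers' subgame induced by `τ`. -/
def IsNash (v : B → G → ℕ) (τ : S → Finpartition (univ : Finset G)) (σ : B → S) : Prop :=
  ∀ (b : B) (s : S), ubuyer v τ (Function.update σ b s) b ≤ ubuyer v τ σ b

/-- `p^i(G)`: the number of goods demanded by at least `i` buyers. -/
def pdem (v : B → G → ℕ) (i : ℕ) : ℕ :=
  (univ.filter (fun g : G => i ≤ ∑ b : B, v b g)).card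

/-- The trivial (indiscrete) partition `{G}`, which discloses nothing. -/
def trivPart (G : Type*) [Fintype G] [DecidableEq G] [Nonempty G] :
    Finpartition (univ : Finset G) :=
  Finpartition.indiscrete Finset.univ_nonempty.ne_empty

/-- `(π, f)` is a pure subgame perfect equilibrium of the two-stage game. -/
def IsSPE (v : B → G → ℕ) (π : S → Finpartition (univ : Finset G))
    (f : (S → Finpartition (univ : Finset G)) → (B → S)) : Prop :=
  (∀ τ, IsNash v τ (f τ)) ∧
  ∀ (s : S) (ρ : Finpartition (univ : Finset G)),
    useller v (Function.update π s ρ) (f (Function.update π s ρ)) s ≤ useller v π (f π) s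

/-! Binary valuations bound the top value of a bundle by its size, so a monopolist's welfare
is at most `1`. It therefore suffices that the unnormalised competitive welfare
`∑ s, ∑ Ḡ ∈ τ s, V̄1(B_s, Ḡ)` is at least `|S|`. If every seller has a buyer `b`, she alone
contributes `v_b(G) ≥ 1`. Otherwise some seller is idle, and a buyer switching to it pays
second price `0` for everything, so at an equilibrium every buyer's utility is at least
`v_b(G)/|G| ≥ 1/|G|`. Within a bundle only the top bidder can have a positive surplus, so the
surpluses sum to at most `V̄1`, and the welfare is at least the total utility, i.e. at least
`|B| ≥ |S|`. -/

theorem Finpartition.sum_sum_parts {α M : Type*} [DecidableEq α] [AddCommMonoid M]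
    {s : Finset α} (π : Finpartition s) (f : α → M) :
    ∑ t ∈ π.parts, ∑ a ∈ t, f a = ∑ a ∈ s, f a := by
  conv_rhs => rw [← π.biUnion_parts]
  exact (sum_biUnion π.supIndep.pairwiseDisjoint).symm

section

variable {B G S : Type*}

theorem vsum_le_V1 (v : B → G → ℕ) {Bb : Finset B} {b : B} (hb : b ∈ Bb) (Gb : Finset G) :
    vsum v b Gb ≤ V1 v Bb Gb :=
  le_sup (f := fun b => vsum v b Gb) hb

theorem sum_vsum_parts [DecidableEq G] (v : B → G → ℕ) (b : B) {U : Finset G}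
    (π : Finpartition U) : ∑ Gb ∈ π.parts, vsum v b Gb = vsum v b U :=
  π.sum_sum_parts (v b)

theorem V1_le_card (v : B → G → ℕ) (hv : ∀ b g, v b g ≤ 1) (Bb : Finset B) (Gb : Finset G) :
    V1 v Bb Gb ≤ Gb.card :=
  Finset.sup_le fun b _ => card_eq_sum_ones Gb ▸ sum_le_sum fun g _ => hv b g

theorem V2_singleton [DecidableEq B] (v : B → G → ℕ) (b : B) (Gb : Finset G) :
    V2 v {b} Gb = 0 := by
  simp [V2, V1]

theorem min_le_V2 [DecidableEq B] (v : B → G → ℕ) {Bb : Finset B} {a b : B}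
    (hab : a ≠ b) (ha : a ∈ Bb) (hb : b ∈ Bb) (Gb : Finset G) :
    min (vsum v a Gb) (vsum v b Gb) ≤ V2 v Bb Gb := by
  rw [V2, dif_pos ⟨a, ha⟩]
  refine le_inf' _ _ fun c _ => ?_
  rcases eq_or_ne c a with rfl | hca
  · exact (min_le_right _ _).trans (vsum_le_V1 v (mem_erase.2 ⟨hab.symm, hb⟩) Gb)
  · exact (min_le_left _ _).trans (vsum_le_V1 v (mem_erase.2 ⟨hca.symm, ha⟩) Gb)

theorem sum_surplus_le_V1 [DecidableEq B] (v : B → G → ℕ) (Bb : Finset B) (Gb : Finset G) :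
    ∑ b ∈ Bb, max ((vsum v b Gb : ℚ) - V2 v Bb Gb) 0 ≤ V1 v Bb Gb := by
  by_cases h : ∃ a ∈ Bb, V2 v Bb Gb < vsum v a Gb
  · obtain ⟨a, ha, hlt⟩ := h
    have hothers : ∀ b ∈ Bb, b ≠ a → max ((vsum v b Gb : ℚ) - V2 v Bb Gb) 0 = 0 := by
      intro b hb hba
      have hmin := min_le_V2 v hba hb ha Gb
      have hle : vsum v b Gb ≤ V2 v Bb Gb := by omega
      exact max_eq_right (sub_nonpos.2 (Nat.cast_le.2 hle))
    rw [sum_eq_single_of_mem a ha hothers]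
    calc max ((vsum v a Gb : ℚ) - V2 v Bb Gb) 0 ≤ vsum v a Gb :=
          max_le (sub_le_self _ (Nat.cast_nonneg _)) (Nat.cast_nonneg _)
      _ ≤ V1 v Bb Gb := Nat.cast_le.2 (vsum_le_V1 v ha Gb)
  · push Not at h
    rw [sum_eq_zero fun b hb => max_eq_right (sub_nonpos.2 (Nat.cast_le.2 (h b hb)))]
    positivity

theorem buyersOf_update_eq_singleton [Fintype B] [DecidableEq B] [DecidableEq S]
    {σ : B → S} {s : S} (hs : buyersOf σ s = ∅) (b : B) :
    buyersOf (Function.update σ b s) s = {b} := by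
  ext x
  rcases eq_or_ne x b with rfl | hx
  · simp [buyersOf]
  · have : σ x ≠ s := fun h => (eq_empty_iff_forall_notMem.1 hs x) (by simp [buyersOf, h])
    simp [buyersOf, this, hx]

theorem ubuyer_update_of_buyersOf_eq_empty [Fintype B] [Fintype G] [DecidableEq B]
    [DecidableEq G] [DecidableEq S] (v : B → G → ℕ) (τ : S → Finpartition (univ : Finset G))
    {σ : B → S} {s : S} (hs : buyersOf σ s = ∅) (b : B) :
    ubuyer v τ (Function.update σ b s) b = (Fintype.card G : ℚ)⁻¹ * vsum v b univ := by
  simp only [ubuyer, Function.update_self, buyersOf_update_eq_singleton hs, V2_singleton,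
    Nat.cast_zero, sub_zero, max_eq_left (Nat.cast_nonneg _)]
  rw [← Nat.cast_sum, sum_vsum_parts]

variable [Fintype B] [Fintype G] [Fintype S] [DecidableEq G] [DecidableEq S]
  (v : B → G → ℕ) (τ : S → Finpartition (univ : Finset G)) (σ : B → S)

def welfareSum : ℚ :=
  ∑ s : S, ∑ Gb ∈ (τ s).parts, (V1 v (buyersOf σ s) Gb : ℚ)

theorem card_le_welfareSum_of_forall_nonempty (hdem : ∀ b : B, 1 ≤ vsum v b univ)
    (hσ : ∀ s, (buyersOf σ s).Nonempty) : (Fintype.card S : ℚ) ≤ welfareSum v τ σ := by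
  rw [welfareSum, ← nsmul_one, ← card_univ, ← sum_const]
  refine sum_le_sum fun s _ => ?_
  obtain ⟨b, hb⟩ := hσ s
  calc (1 : ℚ) ≤ vsum v b univ := Nat.one_le_cast.2 (hdem b)
    _ = ∑ Gb ∈ (τ s).parts, (vsum v b Gb : ℚ) := by
        exact_mod_cast (sum_vsum_parts v b (τ s)).symm
    _ ≤ ∑ Gb ∈ (τ s).parts, (V1 v (buyersOf σ s) Gb : ℚ) :=
        sum_le_sum fun Gb _ => Nat.cast_le.2 (vsum_le_V1 v hb Gb)

variable [DecidableEq B]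

theorem sum_ubuyer_le_welfareSum :
    ∑ b, ubuyer v τ σ b ≤ (Fintype.card G : ℚ)⁻¹ * welfareSum v τ σ := by
  rw [← sum_fiberwise univ σ, welfareSum, mul_sum]
  refine sum_le_sum fun s _ => ?_
  calc ∑ b ∈ buyersOf σ s, ubuyer v τ σ b
      = (Fintype.card G : ℚ)⁻¹ * ∑ Gb ∈ (τ s).parts, ∑ b ∈ buyersOf σ s,
          max ((vsum v b Gb : ℚ) - V2 v (buyersOf σ s) Gb) 0 := by
        rw [sum_comm, mul_sum]
        refine sum_congr rfl fun b hb => ?_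
        rw [ubuyer, (mem_filter.1 hb).2]
    _ ≤ (Fintype.card G : ℚ)⁻¹ * ∑ Gb ∈ (τ s).parts, (V1 v (buyersOf σ s) Gb : ℚ) := by
        gcongr with Gb
        exact sum_surplus_le_V1 v _ Gb

theorem card_le_welfareSum_of_isNash_of_buyersOf_eq_empty [Nonempty G]
    (hdem : ∀ b : B, 1 ≤ vsum v b univ) (hB : Fintype.card S ≤ Fintype.card B)
    (hσ : IsNash v τ σ) {s : S} (hs : buyersOf σ s = ∅) :
    (Fintype.card S : ℚ) ≤ welfareSum v τ σ := by
  have hG : (0 : ℚ) < (Fintype.card G : ℚ)⁻¹ := by positivity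
  have hdev : ∀ b, (Fintype.card G : ℚ)⁻¹ ≤ ubuyer v τ σ b := fun b =>
    calc (Fintype.card G : ℚ)⁻¹ ≤ (Fintype.card G : ℚ)⁻¹ * vsum v b univ :=
          le_mul_of_one_le_right hG.le (Nat.one_le_cast.2 (hdem b))
      _ = ubuyer v τ (Function.update σ b s) b :=
          (ubuyer_update_of_buyersOf_eq_empty v τ hs b).symm
      _ ≤ ubuyer v τ σ b := hσ b s
  refine le_of_mul_le_mul_left ?_ hG
  calc (Fintype.card G : ℚ)⁻¹ * Fintype.card S ≤ ∑ _b : B, (Fintype.card G : ℚ)⁻¹ := by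
        rw [sum_const, card_univ, nsmul_eq_mul, mul_comm]
        gcongr
    _ ≤ ∑ b, ubuyer v τ σ b := sum_le_sum fun b _ => hdev b
    _ ≤ (Fintype.card G : ℚ)⁻¹ * welfareSum v τ σ := sum_ubuyer_le_welfareSum v τ σ

theorem card_le_welfareSum_of_isNash [Nonempty G] (hdem : ∀ b : B, 1 ≤ vsum v b univ)
    (hB : Fintype.card S ≤ Fintype.card B) (hσ : IsNash v τ σ) :
    (Fintype.card S : ℚ) ≤ welfareSum v τ σ := by
  by_cases hfull : ∀ s, (buyersOf σ s).Nonempty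
  · exact card_le_welfareSum_of_forall_nonempty v τ σ hdem hfull
  · push Not at hfull
    obtain ⟨s, hs⟩ := hfull
    exact card_le_welfareSum_of_isNash_of_buyersOf_eq_empty v τ σ hdem hB hσ hs

end

theorem SW1_le_one {B G : Type*} [Fintype B] [Fintype G] [DecidableEq G] (v : B → G → ℕ)
    (hv : ∀ b g, v b g ≤ 1) (π : Finpartition (univ : Finset G)) : SW1 v π ≤ 1 := by
  rw [SW1, ← Nat.cast_sum]
  refine inv_mul_le_one_of_le₀ (Nat.cast_le.2 ?_) (Nat.cast_nonneg _)
  calc ∑ Gb ∈ π.parts, V1 v univ Gb ≤ ∑ Gb ∈ π.parts, Gb.card :=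
        sum_le_sum fun Gb _ => V1_le_card v hv univ Gb
    _ = Fintype.card G := by rw [π.sum_card_parts, card_univ]

theorem nash_sw_ge_monopoly_frac_general [Nonempty G] [Nonempty S]
    (v : B → G → ℕ) (hv : ∀ b g, v b g ≤ 1)
    (hB : Fintype.card S ≤ Fintype.card B)
    (hdem : ∀ b : B, 1 ≤ vsum v b (univ : Finset G))
    (πhat : Finpartition (univ : Finset G))
    (τ : S → Finpartition (univ : Finset G)) (σ : B → S) (hσ : IsNash v τ σ) :
    SW1 v πhat ≤ (Fintype.card G : ℚ) * SWm v τ σ := by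
  have hS : (0 : ℚ) < Fintype.card S := Nat.cast_pos.2 Fintype.card_pos
  have hG : (Fintype.card G : ℚ) ≠ 0 := Nat.cast_ne_zero.2 Fintype.card_ne_zero
  calc SW1 v πhat ≤ 1 := SW1_le_one v hv πhat
    _ ≤ (Fintype.card S : ℚ)⁻¹ * welfareSum v τ σ := by
        rw [le_inv_mul_iff₀ hS, mul_one]
        exact card_le_welfareSum_of_isNash v τ σ hdem hB hσ
    _ = (Fintype.card G : ℚ) * SWm v τ σ := by
        rw [SWm, ← welfareSum, mul_inv]
        field_simp

/-- every equilibrium of the competitive game attains at least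
a `1/|G|` fraction of any monopolist's welfare. -/
theorem nash_sw_ge_monopoly_frac [Nonempty B] [Nonempty G] [Nonempty S]
    (v : B → G → ℕ) (hv : ∀ b g, v b g ≤ 1)
    (hS : 2 ≤ Fintype.card S) (hB : Fintype.card S ≤ Fintype.card B)
    (hdem : ∀ b : B, 1 ≤ vsum v b (univ : Finset G))
    (πhat : Finpartition (univ : Finset G))
    (τ : S → Finpartition (univ : Finset G)) (σ : B → S) (hσ : IsNash v τ σ) :
    SW1 v πhat ≤ (Fintype.card G : ℚ) * SWm v τ σ :=
  nash_sw_ge_monopoly_frac_general v hv hB hdem πhat τ σ hσ
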